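/- Let n ≥ 1, 0 < p < 2/(n-2)⁺, and let ω be a positive solution of Δω - ω + ω^{2p+1} = 0 on ℝⁿ. Assume μ₁, μ₂ ≤ 0, β₁, β₂ > 0, μ₁β₁^p = μ₂β₂^p, and μ₁ + β₂^{(p+1)/2}/β₁^{(p-1)/2} > 0. Then the pair u₁ = (μ₁ + β₂^{(p+1)/2}/β₁^{(p-1)/2})^{-1/(2p)} ω, u₂ = (μ₂ + β₁^{(p+1)/2}/β₂^{(p-1)/2})^{-1/(2p)} ω is a positive solution of the system u₁ - Δu₁ = μ₁u₁^{2p+1} + β₁u₂^{p+1}u₁^{p}, u₂ - Δu₂ = μ₂u₂^{2p+1} + β₂u₁^{p+1}u₂^{p} on ℝⁿ. -/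

import Mathlib

open MeasureTheory

noncomputable section

/-- The Laplacian of `u : ℝⁿ → ℝ`. -/
def lap {n : ℕ} (u : EuclideanSpace ℝ (Fin n) → ℝ) (x : EuclideanSpace ℝ (Fin n)) : ℝ :=
  ∑ i : Fin n, fderiv ℝ (fun y => fderiv ℝ u y (EuclideanSpace.single i 1)) x
    (EuclideanSpace.single i 1)

/-!
Both components are multiples `cᵢ ω` of the ground state `ω`, so the system reduces to the
algebraic equations `c₁ = μ₁ c₁^{2p+1} + β₁ c₂^{p+1} c₁^p` and its mirror image. Writing
`cᵢ = Aᵢ^{-1/(2p)}` one has `Aᵢ cᵢ^{2p} = 1`, and the balance condition `μ₁ β₁^p = μ₂ β₂^p` says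
exactly `β₁^p A₁ = β₂^p A₂`, i.e. `β₁ c₂² = β₂ c₁²`. With this ratio the coupling term
`β₁ c₂^{p+1} c₁^p` becomes `(β₂^{(p+1)/2} / β₁^{(p-1)/2}) c₁^{2p+1}`, which closes the equation.
-/

open Real

lemma fderiv_const_mul_field {𝕜 E : Type*} [NontriviallyNormedField 𝕜] [NormedAddCommGroup E]
    [NormedSpace 𝕜 E] (c : 𝕜) (f : E → 𝕜) :
    fderiv 𝕜 (fun y => c * f y) = c • fderiv 𝕜 f :=
  fderiv_const_smul_field c

lemma lap_const_mul {n : ℕ} (c : ℝ) (u : EuclideanSpace ℝ (Fin n) → ℝ)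
    (x : EuclideanSpace ℝ (Fin n)) : lap (fun y => c * u y) x = c * lap u x := by
  simp only [lap, fderiv_const_mul_field, smul_apply, Pi.smul_apply, smul_eq_mul, Finset.mul_sum]

lemma sub_lap_const_mul_eq {n : ℕ} {p μ β c c' : ℝ} {ω : EuclideanSpace ℝ (Fin n) → ℝ}
    {x : EuclideanSpace ℝ (Fin n)} (hc : 0 ≤ c) (hc' : 0 ≤ c') (hωx : 0 < ω x)
    (hω_sol : lap ω x - ω x + ω x ^ (2 * p + 1) = 0)
    (hcc' : c = μ * c ^ (2 * p + 1) + β * c' ^ (p + 1) * c ^ p) :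
    c * ω x - lap (fun y => c * ω y) x =
      μ * (c * ω x) ^ (2 * p + 1) + β * (c' * ω x) ^ (p + 1) * (c * ω x) ^ p := by
  have hsplit : ω x ^ (2 * p + 1) = ω x ^ (p + 1) * ω x ^ p := by
    rw [← rpow_add hωx]; ring_nf
  rw [lap_const_mul, mul_rpow hc hωx.le, mul_rpow hc' hωx.le, mul_rpow hc hωx.le]
  linear_combination -c * hω_sol + ω x ^ (2 * p + 1) * hcc' + β * c' ^ (p + 1) * c ^ p * hsplit

lemma mul_rpow_neg_one_div_two_mul_rpow {A p : ℝ} (hA : 0 < A) (hp : p ≠ 0) :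
    A * (A ^ (-(1 / (2 * p)))) ^ (2 * p) = 1 := by
  rw [← rpow_mul hA.le, show -(1 / (2 * p)) * (2 * p) = -1 by field_simp, rpow_neg_one,
    mul_inv_cancel₀ hA.ne']

lemma rpow_mul_div_rpow_eq_mul_rpow {a b p : ℝ} (ha : 0 < a) :
    a ^ p * (b ^ ((p + 1) / 2) / a ^ ((p - 1) / 2)) = a ^ ((p + 1) / 2) * b ^ ((p + 1) / 2) := by
  have hsplit : a ^ p = a ^ ((p - 1) / 2) * a ^ ((p + 1) / 2) := by
    rw [← rpow_add ha]; ring_nf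
  rw [hsplit]
  field_simp

lemma mul_sq_eq_of_rpow_mul_eq {a b c c' A B p : ℝ} (ha : 0 < a) (hb : 0 < b) (hc : 0 < c)
    (hc' : 0 < c') (hp : p ≠ 0) (hcA : A * c ^ (2 * p) = 1) (hcB : B * c' ^ (2 * p) = 1)
    (h : a ^ p * A = b ^ p * B) : a * c' ^ 2 = b * c ^ 2 := by
  have hsq : ∀ {x : ℝ}, 0 < x → (x ^ 2) ^ p = x ^ (2 * p) := fun hx => by
    rw [← rpow_natCast, ← rpow_mul hx.le]; norm_num
  apply rpow_left_injOn hp (show 0 ≤ a * c' ^ 2 by positivity) (show 0 ≤ b * c ^ 2 by positivity)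
  dsimp only
  rw [mul_rpow ha.le (by positivity), mul_rpow hb.le (by positivity), hsq hc, hsq hc']
  linear_combination (-a ^ p * c' ^ (2 * p)) * hcA + (b ^ p * c ^ (2 * p)) * hcB
    + c ^ (2 * p) * c' ^ (2 * p) * h

lemma eq_coupled_of_mul_sq_eq {a b c c' μ p : ℝ} (ha : 0 < a) (hb : 0 < b) (hc : 0 < c)
    (hc' : 0 < c') (hcc' : a * c' ^ 2 = b * c ^ 2)
    (hnorm : (μ + b ^ ((p + 1) / 2) / a ^ ((p - 1) / 2)) * c ^ (2 * p) = 1) :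
    c = μ * c ^ (2 * p + 1) + a * c' ^ (p + 1) * c ^ p := by
  have hsq : ∀ {x : ℝ}, 0 < x → (x ^ 2) ^ ((p + 1) / 2) = x ^ (p + 1) := fun hx => by
    rw [← rpow_natCast, ← rpow_mul hx.le]; ring_nf
  have hpow : a ^ ((p + 1) / 2) * c' ^ (p + 1) = b ^ ((p + 1) / 2) * c ^ (p + 1) := by
    rw [← hsq hc', ← hsq hc, ← mul_rpow ha.le (by positivity), ← mul_rpow hb.le (by positivity),
      hcc']
  have ha' : a ^ ((p + 1) / 2) = a ^ ((p - 1) / 2) * a := by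
    rw [← rpow_add_one ha.ne']; ring_nf
  have hcoupling : a * c' ^ (p + 1) = b ^ ((p + 1) / 2) / a ^ ((p - 1) / 2) * c ^ (p + 1) := by
    rw [ha'] at hpow
    field_simp
    linear_combination hpow
  have hc₁ : c ^ (2 * p + 1) = c ^ (2 * p) * c := rpow_add_one hc.ne' _
  have hc₂ : c ^ (2 * p + 1) = c ^ (p + 1) * c ^ p := by
    rw [← rpow_add hc]; ring_nf
  rw [hcoupling]
  linear_combination (-c) * hnorm - (μ + b ^ ((p + 1) / 2) / a ^ ((p - 1) / 2)) * hc₁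
    + b ^ ((p + 1) / 2) / a ^ ((p - 1) / 2) * hc₂

theorem explicit_pair_is_positive_solution_general
    {n : ℕ} (p μ₁ μ₂ β₁ β₂ : ℝ)
    (hp : 0 < p)
    (ω : EuclideanSpace ℝ (Fin n) → ℝ)
    (hω_pos : ∀ x, 0 < ω x)
    (hω_sol : ∀ x, lap ω x - ω x + ω x ^ (2 * p + 1) = 0)
    (hβ₁ : 0 < β₁) (hβ₂ : 0 < β₂)
    (hbal : μ₁ * β₁ ^ p = μ₂ * β₂ ^ p)
    (hpos : 0 < μ₁ + β₂ ^ ((p + 1) / 2) / β₁ ^ ((p - 1) / 2)) :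
    let c₁ : ℝ := (μ₁ + β₂ ^ ((p + 1) / 2) / β₁ ^ ((p - 1) / 2)) ^ (-(1 / (2 * p)))
    let c₂ : ℝ := (μ₂ + β₁ ^ ((p + 1) / 2) / β₂ ^ ((p - 1) / 2)) ^ (-(1 / (2 * p)))
    (∀ x, 0 < c₁ * ω x) ∧ (∀ x, 0 < c₂ * ω x) ∧
    (∀ x, c₁ * ω x - lap (fun y => c₁ * ω y) x =
      μ₁ * (c₁ * ω x) ^ (2 * p + 1) + β₁ * (c₂ * ω x) ^ (p + 1) * (c₁ * ω x) ^ p) ∧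
    (∀ x, c₂ * ω x - lap (fun y => c₂ * ω y) x =
      μ₂ * (c₂ * ω x) ^ (2 * p + 1) + β₂ * (c₁ * ω x) ^ (p + 1) * (c₂ * ω x) ^ p) := by
  intro c₁ c₂
  set A₁ := μ₁ + β₂ ^ ((p + 1) / 2) / β₁ ^ ((p - 1) / 2)
  set A₂ := μ₂ + β₁ ^ ((p + 1) / 2) / β₂ ^ ((p - 1) / 2)
  have hA : β₁ ^ p * A₁ = β₂ ^ p * A₂ := by
    linear_combination hbal + rpow_mul_div_rpow_eq_mul_rpow (b := β₂) (p := p) hβ₁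
      - rpow_mul_div_rpow_eq_mul_rpow (b := β₁) (p := p) hβ₂
  have hA₂ : 0 < A₂ := pos_of_mul_pos_right (by rw [← hA]; positivity) (by positivity)
  have hc₁ : 0 < c₁ := rpow_pos_of_pos hpos _
  have hc₂ : 0 < c₂ := rpow_pos_of_pos hA₂ _
  have hnorm₁ := mul_rpow_neg_one_div_two_mul_rpow hpos hp.ne'
  have hnorm₂ := mul_rpow_neg_one_div_two_mul_rpow hA₂ hp.ne'
  have hratio := mul_sq_eq_of_rpow_mul_eq hβ₁ hβ₂ hc₁ hc₂ hp.ne' hnorm₁ hnorm₂ hA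
  refine ⟨fun x => mul_pos hc₁ (hω_pos x), fun x => mul_pos hc₂ (hω_pos x),
    fun x => sub_lap_const_mul_eq hc₁.le hc₂.le (hω_pos x) (hω_sol x) ?_,
    fun x => sub_lap_const_mul_eq hc₂.le hc₁.le (hω_pos x) (hω_sol x) ?_⟩
  · exact eq_coupled_of_mul_sq_eq hβ₁ hβ₂ hc₁ hc₂ hratio hnorm₁
  · exact eq_coupled_of_mul_sq_eq hβ₂ hβ₁ hc₂ hc₁ hratio.symm hnorm₂

/-- The explicit pair
`u₁ = (μ₁ + β₂^{(p+1)/2}/β₁^{(p-1)/2})^{-1/(2p)} ω`,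
`u₂ = (μ₂ + β₁^{(p+1)/2}/β₂^{(p-1)/2})^{-1/(2p)} ω`
is a positive solution of the system
`u₁ - Δu₁ = μ₁u₁^{2p+1} + β₁u₂^{p+1}u₁^{p}`, `u₂ - Δu₂ = μ₂u₂^{2p+1} + β₂u₁^{p+1}u₂^{p}`. -/
theorem explicit_pair_is_positive_solution
    {n : ℕ} (hn : 1 ≤ n) (p μ₁ μ₂ β₁ β₂ : ℝ)
    (hp : 0 < p) (hpn : 3 ≤ n → p < 2 / ((n : ℝ) - 2))
    (ω : EuclideanSpace ℝ (Fin n) → ℝ)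
    (hω_pos : ∀ x, 0 < ω x)
    (hω_sol : ∀ x, lap ω x - ω x + ω x ^ (2 * p + 1) = 0)
    (hμ₁ : μ₁ ≤ 0) (hμ₂ : μ₂ ≤ 0) (hβ₁ : 0 < β₁) (hβ₂ : 0 < β₂)
    (hbal : μ₁ * β₁ ^ p = μ₂ * β₂ ^ p)
    (hpos : 0 < μ₁ + β₂ ^ ((p + 1) / 2) / β₁ ^ ((p - 1) / 2)) :
    let c₁ : ℝ := (μ₁ + β₂ ^ ((p + 1) / 2) / β₁ ^ ((p - 1) / 2)) ^ (-(1 / (2 * p)))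
    let c₂ : ℝ := (μ₂ + β₁ ^ ((p + 1) / 2) / β₂ ^ ((p - 1) / 2)) ^ (-(1 / (2 * p)))
    (∀ x, 0 < c₁ * ω x) ∧ (∀ x, 0 < c₂ * ω x) ∧
    (∀ x, c₁ * ω x - lap (fun y => c₁ * ω y) x =
      μ₁ * (c₁ * ω x) ^ (2 * p + 1) + β₁ * (c₂ * ω x) ^ (p + 1) * (c₁ * ω x) ^ p) ∧
    (∀ x, c₂ * ω x - lap (fun y => c₂ * ω y) x =
      μ₂ * (c₂ * ω x) ^ (2 * p + 1) + β₂ * (c₁ * ω x) ^ (p + 1) * (c₂ * ω x) ^ p) :=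
  explicit_pair_is_positive_solution_general p μ₁ μ₂ β₁ β₂ hp ω hω_pos hω_sol hβ₁ hβ₂ hbal hpos
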